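/- Under mixed CSIT, increasing the receive-side cache strictly increases the degrees of freedom: for all integers t_t ≥ 1, t_r ≥ 0 and every real α ∈ [0,1], d_M(t_t, t_r+1, α) > d_M(t_t, t_r, α). -/

import Mathlib

/-! Moving the receive-side cache from `t_r` to `t_r + 1` raises the zero-feedback part `t_t + t_r`
of `d_M` by exactly one, and shifts the window of the harmonic sum in `d_D` one step to the right,
which strictly lowers the sum and so strictly raises `d_D`. Since `d_M` is the convex combination
`(1 - α)(t_t + t_r) + α d_D`, both gains survive for every `α ∈ [0, 1]`. -/

/-- Delayed-CSIT degrees of freedom: `d_D(t_t, t_r) = t_t / (∑_{j=t_r+1}^{t_r+t_t} 1/j)`. -/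
noncomputable def dD (tt tr : ℕ) : ℝ :=
  (tt : ℝ) / ∑ j ∈ Finset.Icc (tr + 1) (tr + tt), (1 : ℝ) / (j : ℝ)

/-- Mixed-CSIT degrees of freedom:
`d_M(t_t, t_r, α) = (t_t + t_r) + α·(d_D(t_t,t_r) − (t_t + t_r))`. -/
noncomputable def dM (tt tr : ℕ) (α : ℝ) : ℝ :=
  ((tt : ℝ) + (tr : ℝ)) + α * (dD tt tr - ((tt : ℝ) + (tr : ℝ)))

open Finset

theorem Finset.sum_Icc_succ_lt_of_strictAntiOn {M : Type*} [AddCommMonoid M] [PartialOrder M]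
    [IsOrderedCancelAddMonoid M] {f : ℕ → M} {a b : ℕ} (hf : StrictAntiOn f (Set.Ici a))
    (hab : a ≤ b) : ∑ j ∈ Icc (a + 1) (b + 1), f j < ∑ j ∈ Icc a b, f j := by
  rw [← map_add_right_Icc, sum_map]
  refine sum_lt_sum_of_nonempty (nonempty_Icc.2 hab) fun j hj => ?_
  have hj : a ≤ j := (mem_Icc.1 hj).1
  exact hf hj (show a ≤ j + 1 by omega) (Nat.lt_succ_self j)

lemma sum_Icc_one_div_pos (r n : ℕ) (hn : 1 ≤ n) :
    0 < ∑ j ∈ Icc (r + 1) (r + n), (1 : ℝ) / j :=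
  sum_pos (fun j hj => one_div_pos.2 (Nat.cast_pos.2 (by have := (mem_Icc.1 hj).1; omega)))
    (nonempty_Icc.2 (by omega))

lemma sum_Icc_one_div_succ_lt (r n : ℕ) (hn : 1 ≤ n) :
    ∑ j ∈ Icc (r + 1 + 1) (r + 1 + n), (1 : ℝ) / j < ∑ j ∈ Icc (r + 1) (r + n), (1 : ℝ) / j := by
  rw [show r + 1 + n = r + n + 1 by omega]
  refine sum_Icc_succ_lt_of_strictAntiOn (fun i hi j _ hij => ?_) (by omega)
  exact one_div_lt_one_div_of_lt (Nat.cast_pos.2 (r.succ_pos.trans_le hi)) (Nat.cast_lt.2 hij)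

lemma dD_lt_dD_succ (tt tr : ℕ) (htt : 1 ≤ tt) : dD tt tr < dD tt (tr + 1) :=
  div_lt_div_of_pos_left (Nat.cast_pos.2 htt) (sum_Icc_one_div_pos (tr + 1) tt htt)
    (sum_Icc_one_div_succ_lt tr tt htt)

lemma dM_succ_sub_dM (tt tr : ℕ) (α : ℝ) :
    dM tt (tr + 1) α - dM tt tr α = (1 - α) + α * (dD tt (tr + 1) - dD tt tr) := by
  unfold dM
  push_cast
  ring

/-- Under mixed CSIT, more receive-side cache strictly increases the DoF:
`d_M(t_t, t_r+1, α) > d_M(t_t, t_r, α)` for `t_t ≥ 1`, `t_r ≥ 0`, `α ∈ [0,1]`. -/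
theorem stmt_12 (tt tr : ℕ) (htt : 1 ≤ tt) (α : ℝ) (hα0 : 0 ≤ α) (hα1 : α ≤ 1) :
    dM tt (tr + 1) α > dM tt tr α := by
  have hgain : 0 < dD tt (tr + 1) - dD tt tr := sub_pos.2 (dD_lt_dD_succ tt tr htt)
  have hdiff := dM_succ_sub_dM tt tr α
  rcases hα1.lt_or_eq with hα1 | rfl
  · linarith [mul_nonneg hα0 hgain.le]
  · linarith
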